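/- arXiv:1105.1918 — 5 statements merged into one kernel-verified Lean document; each statement's English description precedes it below -/
import Mathlib

section
/- Let S = ⊕_{k=1}^{b} S_k(Γ_1(M)) with S_k := S_k(Γ_1(M)). The natural map T_Q(S) → ∏_{k=1}^{b} T_Q(S_k), given by restricting Hecke operators to each weight-graded piece, is an isomorphism of Q-algebras. -/
/-!
Restricting to the graded pieces is an injective algebra map `T_ℚ(S) → ∏ T_ℚ(S_k)`, because a
block-diagonal operator is determined by its blocks, so it suffices to compare dimensions.
The pairing `(t, f) ↦ a₁(t f)` embeds `S` into the dual of `T_ℂ(S)` and, the operators being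
commutative, embeds `T_ℂ(S_k)` into the dual of `S_k`. Hence
`dim S ≤ dim_ℂ T_ℂ(S) ≤ dim_ℚ T_ℚ(S)`. On the other side, the Hecke-stable lattice makes
`T_ℚ(S_k)` consist of rational matrices, and `ℚ`-independent rational matrices stay
`ℂ`-independent, so `dim_ℚ T_ℚ(S_k) ≤ dim_ℂ T_ℂ(S_k) ≤ dim S_k`.
-/

open Module Submodule Algebra

section Pairing

variable {K W : Type*} [Field K] [AddCommGroup W] [Module K W] [FiniteDimensional K W]
  {S : Set (Module.End K W)} {ℓ : Module.Dual K W}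

variable (S ℓ) in
def adjoinPairing : adjoin K S →ₗ[K] Module.Dual K W :=
  LinearMap.llcomp K W W K ℓ ∘ₗ (adjoin K S).val.toLinearMap

theorem finrank_le_finrank_adjoin (hℓ : ∀ w, (∀ f ∈ S, ℓ (f w) = 0) → w = 0) :
    finrank K W ≤ finrank K (adjoin K S) := by
  have hinj : Function.Injective (adjoinPairing S ℓ).flip := by
    rw [← LinearMap.ker_eq_bot, LinearMap.ker_eq_bot']
    exact fun w hw => hℓ w fun f hf => LinearMap.congr_fun hw ⟨f, subset_adjoin hf⟩
  simpa [Subspace.dual_finrank_eq] using LinearMap.finrank_le_finrank_of_injective hinj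

theorem finrank_adjoin_le_of_commute (hS : ∀ f ∈ S, ∀ g ∈ S, Commute f g)
    (hℓ : ∀ w, (∀ f ∈ S, ℓ (f w) = 0) → w = 0) :
    finrank K (adjoin K S) ≤ finrank K W := by
  have hinj : Function.Injective (adjoinPairing S ℓ) := by
    rw [← LinearMap.ker_eq_bot, LinearMap.ker_eq_bot']
    rintro ⟨t, ht⟩ h0
    refine Subtype.ext <| LinearMap.ext fun w => hℓ (t w) fun f hf => ?_
    have hft : Commute f t := commute_of_mem_adjoin_of_forall_mem_commute ht (hS f hf)
    rw [← Module.End.mul_apply, hft.eq, Module.End.mul_apply]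
    exact LinearMap.congr_fun h0 (f w)
  simpa [Subspace.dual_finrank_eq] using LinearMap.finrank_le_finrank_of_injective hinj

end Pairing

section Tower

variable {F K : Type*} [Field F] [Field K] [Algebra F K]

theorem Submodule.finrank_span_of_tower_le {N : Type*} [AddCommGroup N] [Module K N]
    [Module F N] [IsScalarTower F K N] (P : Submodule F N) [FiniteDimensional F P] :
    finrank K (span K (P : Set N)) ≤ finrank F P := by
  let u := Module.finBasis F P
  have hP : span K (P : Set N) = span K (Set.range (P.subtype ∘ u)) := by
    rw [← span_span_of_tower F K (Set.range _), Set.range_comp, ← map_span, u.span_eq, map_top,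
      range_subtype]
  rw [hP]
  exact (finrank_range_le_card (R := K) _).trans_eq (Fintype.card_fin _)

theorem LinearIndependent.map_of_basis_to_basis {ι κ M N : Type*} [AddCommGroup M] [Module F M]
    [AddCommGroup N] [Module K N] [Module F N] [IsScalarTower F K N]
    (b : Basis ι F M) (c : Basis ι K N) (f : M →ₗ[F] N) (hf : ∀ i, f (b i) = c i)
    {v : κ → M} (hv : LinearIndependent F v) : LinearIndependent K (f ∘ v) := by
  let e := (b.baseChange K).equiv c (Equiv.refl ι)
  have he : f.liftBaseChange K = e.toLinearMap := (b.baseChange K).ext fun i => by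
    rw [Basis.baseChange_apply, LinearMap.liftBaseChange_tmul, one_smul, hf, LinearEquiv.coe_coe,
      ← Basis.baseChange_apply, Basis.equiv_apply, Equiv.refl_apply]
  have hev : e.toLinearMap ∘ (fun j => (1 : K) ⊗ₜ[F] v j) = f ∘ v :=
    funext fun j => by
      rw [Function.comp_apply, ← he, LinearMap.liftBaseChange_tmul, one_smul, Function.comp_apply]
  have h1 : LinearIndependent K (fun j => (1 : K) ⊗ₜ[F] v j) :=
    Module.Flat.linearIndependent_one_tmul hv
  rw [← hev]
  exact h1.map' e.toLinearMap e.ker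

theorem finrank_le_finrank_span_of_le_range {ι M N : Type*} [Fintype ι] [AddCommGroup M]
    [Module F M] [AddCommGroup N] [Module K N] [Module F N] [IsScalarTower F K N]
    (b : Basis ι F M) (c : Basis ι K N) (f : M →ₗ[F] N) (hf : ∀ i, f (b i) = c i)
    (P : Submodule F N) (hP : P ≤ LinearMap.range f) :
    finrank F P ≤ finrank K (span K (P : Set N)) := by
  have : FiniteDimensional F M := b.finiteDimensional_of_finite
  have : FiniteDimensional K N := c.finiteDimensional_of_finite
  have : FiniteDimensional F P := Submodule.finiteDimensional_of_le hP
  let u := Module.finBasis F P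
  choose m hm using fun j => hP (u j).2
  have hm' : f ∘ m = P.subtype ∘ u := funext hm
  have hli : LinearIndependent F m :=
    LinearIndependent.of_comp f (hm' ▸ u.linearIndependent.map' P.subtype P.ker_subtype)
  calc finrank F P = finrank K (span K (Set.range (f ∘ m))) := by
        rw [finrank_span_eq_card (hli.map_of_basis_to_basis b c f hf), Fintype.card_fin]
    _ ≤ finrank K (span K (P : Set N)) := by
        refine Submodule.finrank_mono (span_mono ?_)
        rintro _ ⟨j, rfl⟩
        simp [hm]

variable {A : Type*} [Ring A] [Algebra K A] [Algebra F A] [IsScalarTower F K A]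

theorem Algebra.span_adjoin_of_tower (S : Set A) :
    span K (adjoin F S : Set A) = Subalgebra.toSubmodule (adjoin K S) := by
  rw [adjoin_eq_span, ← Subalgebra.coe_toSubmodule, adjoin_eq_span, span_span_of_tower]

theorem finrank_adjoin_le_finrank_adjoin_of_tower (S : Set A) [FiniteDimensional F (adjoin F S)] :
    finrank K (adjoin K S) ≤ finrank F (adjoin F S) := by
  rw [← Subalgebra.finrank_toSubmodule, ← Algebra.span_adjoin_of_tower (F := F)]
  exact Submodule.finrank_span_of_tower_le (Subalgebra.toSubmodule (adjoin F S))

end Tower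

section Rational

variable {F K W ι : Type*} [Field F] [Field K] [Algebra F K] [AddCommGroup W] [Module K W]
  [Fintype ι] [DecidableEq ι] [Algebra F (Module.End K W)] [IsScalarTower F K (Module.End K W)]

variable (F) in
noncomputable def Module.Basis.matrixToEnd (bas : Basis ι K W) :
    Matrix ι ι F →ₐ[F] Module.End K W :=
  ((Matrix.toLinAlgEquiv bas).toAlgHom.restrictScalars F).comp (Algebra.ofId F K).mapMatrix

theorem Module.Basis.matrixToEnd_apply (bas : Basis ι K W) (M : Matrix ι ι F) :
    bas.matrixToEnd F M = Matrix.toLin bas bas (M.map (algebraMap F K)) :=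
  rfl

theorem Module.Basis.matrixToEnd_stdBasis (bas : Basis ι K W) (ij : ι × ι) :
    bas.matrixToEnd F (Matrix.stdBasis F ι ι ij) = bas.end ij := by
  obtain ⟨i, j⟩ := ij
  rw [matrixToEnd_apply, Basis.end_apply, Matrix.stdBasis_eq_single, Matrix.stdBasis_eq_single]
  congr 1
  ext
  simp [Matrix.single_apply]

theorem Module.Basis.mem_range_matrixToEnd_of_mem_span_int (bas : Basis ι K W)
    {f : Module.End K W} (hf : ∀ i, f (bas i) ∈ span ℤ (Set.range bas)) :
    f ∈ (bas.matrixToEnd F).range := by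
  choose c hc using fun i => (mem_span_range_iff_exists_fun ℤ).1 (hf i)
  refine ⟨Matrix.of fun j i => (c i j : F), bas.ext fun i => ?_⟩
  simp [matrixToEnd_apply, Matrix.toLin_self, ← hc i, Int.cast_smul_eq_zsmul]

variable {bas : Basis ι K W} {S : Set (Module.End K W)}

theorem toSubmodule_adjoin_le_range_matrixToEnd (hS : S ⊆ (bas.matrixToEnd F).range) :
    Subalgebra.toSubmodule (adjoin F S) ≤ LinearMap.range (bas.matrixToEnd F).toLinearMap :=
  adjoin_le hS

theorem finiteDimensional_adjoin_of_subset_range (hS : S ⊆ (bas.matrixToEnd F).range) :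
    FiniteDimensional F (adjoin F S) :=
  Submodule.finiteDimensional_of_le (toSubmodule_adjoin_le_range_matrixToEnd hS)

theorem finrank_adjoin_le_finrank_adjoin_of_subset_range (hS : S ⊆ (bas.matrixToEnd F).range) :
    finrank F (adjoin F S) ≤ finrank K (adjoin K S) := by
  have h := finrank_le_finrank_span_of_le_range (Matrix.stdBasis F ι ι) bas.end
    (bas.matrixToEnd F).toLinearMap bas.matrixToEnd_stdBasis _
    (toSubmodule_adjoin_le_range_matrixToEnd hS)
  rwa [Subalgebra.coe_toSubmodule, Algebra.span_adjoin_of_tower, Subalgebra.finrank_toSubmodule,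
    Subalgebra.finrank_toSubmodule] at h

theorem range_subset_range_matrixToEnd_of_mem_span_int {κ : Type*} {T : κ → Module.End K W}
    (hT : ∀ n i, T n (bas i) ∈ span ℤ (Set.range bas)) :
    Set.range T ⊆ (bas.matrixToEnd F).range := by
  rintro _ ⟨n, rfl⟩
  exact bas.mem_range_matrixToEnd_of_mem_span_int (hT n)

theorem finrank_adjoin_range_le_of_mem_span_int {κ : Type*} {T : κ → Module.End K W}
    (hT : ∀ n i, T n (bas i) ∈ span ℤ (Set.range bas)) (hcomm : ∀ n m, Commute (T n) (T m))
    {ℓ : Module.Dual K W} (hℓ : ∀ w, (∀ n, ℓ (T n w) = 0) → w = 0) :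
    finrank F (adjoin F (Set.range T)) ≤ finrank K W := by
  have : FiniteDimensional K W := bas.finiteDimensional_of_finite
  refine (finrank_adjoin_le_finrank_adjoin_of_subset_range
    (range_subset_range_matrixToEnd_of_mem_span_int hT)).trans
    (finrank_adjoin_le_of_commute ?_ fun w hw => hℓ w fun n => hw _ ⟨n, rfl⟩)
  rintro _ ⟨n, rfl⟩ _ ⟨m, rfl⟩
  exact hcomm n m

end Rational

section AdjoinPi

variable {R κ ι : Type*} [CommSemiring R] {A : κ → Type*} [∀ k, Semiring (A k)]
  [∀ k, Algebra R (A k)]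

noncomputable def Algebra.adjoinRangeToPi (s : ∀ k, ι → A k) :
    adjoin R (Set.range fun n k => s k n) →ₐ[R] Π k, adjoin R (Set.range (s k)) :=
  AlgHom.pi fun k => ((Pi.evalAlgHom R A k).comp (Subalgebra.val _)).codRestrict _ fun x => by
    have hx : (x : Π k, A k) k ∈
        (adjoin R (Set.range fun n k => s k n)).map (Pi.evalAlgHom R A k) :=
      Subalgebra.mem_map.2 ⟨x, x.2, rfl⟩
    rwa [AlgHom.map_adjoin, ← Set.range_comp] at hx

theorem Algebra.adjoinRangeToPi_mk (s : ∀ k, ι → A k) (n : ι) :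
    adjoinRangeToPi (R := R) s ⟨fun k => s k n, subset_adjoin ⟨n, rfl⟩⟩ =
      fun k => ⟨s k n, subset_adjoin ⟨n, rfl⟩⟩ :=
  rfl

theorem Algebra.adjoinRangeToPi_injective (s : ∀ k, ι → A k) :
    Function.Injective (adjoinRangeToPi (R := R) s) :=
  fun _ _ h => Subtype.ext <| funext fun k => congrArg Subtype.val (congrFun h k)

end AdjoinPi

section BlockDiagonal

variable {K κ : Type*} [CommSemiring K] {V : κ → Type*} [∀ k, AddCommMonoid (V k)]
  [∀ k, Module K (V k)]

variable (K V) in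
@[simps]
def LinearMap.piMapAlgHom : (Π k, Module.End K (V k)) →ₐ[K] Module.End K (Π k, V k) where
  toFun := LinearMap.piMap
  map_one' := rfl
  map_mul' _ _ := rfl
  map_zero' := rfl
  map_add' _ _ := rfl
  commutes' _ := rfl

theorem LinearMap.piMapAlgHom_injective : Function.Injective (LinearMap.piMapAlgHom K V) :=
  fun f g h => funext fun k => LinearMap.ext fun y => by
    classical
    simpa using congr_fun (LinearMap.congr_fun h (Pi.single k y)) k

theorem exists_algHom_adjoin_piMap_to_pi {R ι : Type*} [CommSemiring R] [Algebra R K]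
    [∀ k, Algebra R (Module.End K (V k))] [∀ k, IsScalarTower R K (Module.End K (V k))]
    [Algebra R (Module.End K (Π k, V k))] [IsScalarTower R K (Module.End K (Π k, V k))]
    (T : ∀ k, ι → Module.End K (V k)) :
    ∃ φ : adjoin R (Set.range fun n => LinearMap.piMap fun k => T k n) →ₐ[R]
        Π k, adjoin R (Set.range (T k)),
      (∀ n, φ ⟨_, subset_adjoin ⟨n, rfl⟩⟩ = fun k => ⟨T k n, subset_adjoin ⟨n, rfl⟩⟩) ∧
      Function.Injective φ := by
  let ψ := (LinearMap.piMapAlgHom K V).restrictScalars R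
  have hmap : (adjoin R (Set.range fun n k => T k n)).map ψ =
      adjoin R (Set.range fun n => LinearMap.piMap fun k => T k n) := by
    rw [AlgHom.map_adjoin, ← Set.range_comp]
    rfl
  let e := (Subalgebra.equivMapOfInjective _ ψ LinearMap.piMapAlgHom_injective).trans
    (Subalgebra.equivOfEq _ _ hmap)
  refine ⟨(adjoinRangeToPi T).comp e.symm.toAlgHom, fun n => ?_,
    (adjoinRangeToPi_injective T).comp e.symm.injective⟩
  rw [AlgHom.comp_apply, ← adjoinRangeToPi_mk]
  congr 1
  exact e.symm_apply_eq.2 rfl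

end BlockDiagonal

theorem LinearMap.bijective_of_injective_of_finrank_le {F V V₂ : Type*} [DivisionRing F]
    [AddCommGroup V] [Module F V] [AddCommGroup V₂] [Module F V₂] [FiniteDimensional F V₂]
    (f : V →ₗ[F] V₂) (hinj : Function.Injective f) (hle : finrank F V₂ ≤ finrank F V) :
    Function.Bijective f := by
  have : FiniteDimensional F V := .of_injective f hinj
  have heq := le_antisymm (LinearMap.finrank_le_finrank_of_injective hinj) hle
  exact ⟨hinj, (LinearMap.injective_iff_surjective_of_finrank_eq_finrank heq).1 hinj⟩

set_option synthInstance.maxHeartbeats 1000000 in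
set_option maxHeartbeats 1000000 in
theorem stmt8 (b : ℕ)
    (V : Fin b → Type) [∀ k, AddCommGroup (V k)] [∀ k, Module ℂ (V k)]
    (T : ∀ k : Fin b, ℕ → Module.End ℂ (V k))
    (a : ∀ k : Fin b, ℕ → V k →ₗ[ℂ] ℂ)
    (ha1 : ∀ k (n : ℕ), 1 ≤ n → ∀ g : V k, a k 1 (T k n g) = a k n g)
    (hq : ∀ k (g : V k), (∀ n : ℕ, 1 ≤ n → a k n g = 0) → g = 0)
    (hqtot : ∀ f : ∀ k, V k, (∀ n : ℕ, 1 ≤ n → ∑ k, a k n (f k) = 0) → f = 0)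
    (hcomm : ∀ k (n m : ℕ), Commute (T k n) (T k m))
    (hlat : ∀ k, ∃ (ι : Type) (_ : Fintype ι) (bas : Module.Basis ι ℂ (V k)),
      ∀ (n : ℕ+) (i : ι), T k (n : ℕ) (bas i) ∈ Submodule.span ℤ (Set.range bas))
    (Ttot : ℕ → Module.End ℂ (∀ k, V k))
    (hT : ∀ n, Ttot n = LinearMap.pi fun k => (T k n) ∘ₗ LinearMap.proj k) :
    letI : Algebra ℚ (Module.End ℂ (∀ k, V k)) :=
      Algebra.compHom _ (algebraMap ℚ ℂ)
    letI : ∀ k, Algebra ℚ (Module.End ℂ (V k)) := fun k =>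
      Algebra.compHom _ (algebraMap ℚ ℂ)
    ∃ φ : Algebra.adjoin ℚ (Set.range fun n : ℕ+ => Ttot (n : ℕ)) →ₐ[ℚ]
        Π k : Fin b, Algebra.adjoin ℚ (Set.range fun n : ℕ+ => T k (n : ℕ)),
      (∀ n : ℕ+, φ ⟨Ttot (n : ℕ), Algebra.subset_adjoin ⟨n, rfl⟩⟩ =
        fun k => ⟨T k (n : ℕ), Algebra.subset_adjoin ⟨n, rfl⟩⟩) ∧
      Function.Bijective φ := by
  classical
  let _ : Algebra ℚ (Module.End ℂ (∀ k, V k)) := Algebra.compHom _ (algebraMap ℚ ℂ)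
  let _ : ∀ k, Algebra ℚ (Module.End ℂ (V k)) := fun _ => Algebra.compHom _ (algebraMap ℚ ℂ)
  have : IsScalarTower ℚ ℂ (Module.End ℂ (∀ k, V k)) := .of_algebraMap_eq fun _ => rfl
  have : ∀ k, IsScalarTower ℚ ℂ (Module.End ℂ (V k)) := fun _ => .of_algebraMap_eq fun _ => rfl
  obtain rfl : Ttot = fun n => LinearMap.piMap fun k => T k n := funext hT
  choose ι _ bas hbas using hlat
  have := fun k => finiteDimensional_adjoin_of_subset_range (F := ℚ)
    (range_subset_range_matrixToEnd_of_mem_span_int (hbas k))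
  have hdim k := finrank_adjoin_range_le_of_mem_span_int (F := ℚ) (hbas k)
    (fun n m => hcomm k n m) (ℓ := a k 1) fun w hw => hq k w fun n hn => ha1 k n hn w ▸ hw ⟨n, hn⟩
  have : ∀ k, FiniteDimensional ℂ (V k) := fun k => (bas k).finiteDimensional_of_finite
  obtain ⟨φ, hφT, hφinj⟩ := exists_algHom_adjoin_piMap_to_pi (R := ℚ) fun k (n : ℕ+) => T k n
  have : FiniteDimensional ℚ (adjoin ℚ (Set.range fun n : ℕ+ => LinearMap.piMap fun k => T k n)) :=
    .of_injective φ.toLinearMap hφinj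
  refine ⟨φ, hφT, LinearMap.bijective_of_injective_of_finrank_le
    (V := adjoin ℚ (Set.range fun n : ℕ+ => LinearMap.piMap fun k => T k n))
    (V₂ := Π k, adjoin ℚ (Set.range fun n : ℕ+ => T k n)) φ.toLinearMap hφinj ?_⟩
  rw [finrank_pi_fintype]
  refine (Finset.sum_le_sum fun k _ => hdim k).trans ?_
  rw [← finrank_pi_fintype ℂ]
  refine (finrank_le_finrank_adjoin (ℓ := ∑ k, a k 1 ∘ₗ LinearMap.proj k)
    fun w hw => hqtot w fun n hn => ?_).trans (finrank_adjoin_le_finrank_adjoin_of_tower _)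
  simpa [ha1 _ n hn] using hw _ ⟨⟨n, hn⟩, rfl⟩
end

section
/- Let T be a commutative ring, finite and free as a Z-module, D a positive integer, T^(D) ⊆ T a subring such that T is integral over T^(D), and let f : T^(D) → F̄_p be a ring homomorphism. Then there exists a number field K with ring of integers O_K, a prime ideal q of O_K above p, and a ring homomorphism g : T → O_K, such that the composition T^(D) ↪ T → O_K → O_K/q ↪ F̄_p equals f. (Deligne–Serre lifting lemma, Hecke-algebra form.) -/
/-!
Extend `f` from `T'` to `T` (going up, then the algebraic closedness of `F̄_p`) and pick a
minimal prime `P` of `T` inside the kernel of the extension. Minimal primes consist of zero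
divisors, while nonzero integers are not zero divisors in the torsion-free ring `T`; so
`A = T ⧸ P` is a domain of characteristic zero, finite over `ℤ`, whose fraction field `K` is a
number field, and `A` embeds integrally into `O_K`. Extending the induced map `A → F̄_p` once
more, to `O_K`, produces the reduction map; its kernel is the maximal ideal `q`.
-/

theorem RingHom.ker_isMaximal_of_isIntegral_int (p : ℕ) [Fact p.Prime] {R L : Type*}
    [CommRing R] [Algebra ℤ R] [Algebra.IsIntegral ℤ R] [Field L] [CharP L p] (f : R →+* L) :
    (RingHom.ker f).IsMaximal := by
  have hcomap : (RingHom.ker f).comap (algebraMap ℤ R) = Ideal.span {(p : ℤ)} := by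
    rw [RingHom.comap_ker, Subsingleton.elim (f.comp (algebraMap ℤ R)) (algebraMap ℤ L),
      CharP.ker_intAlgebraMap_eq_span]
  have := RingHom.ker_isPrime f
  refine Ideal.isMaximal_of_isIntegral_of_isMaximal_comap (R := ℤ) _ ?_
  rw [hcomap]
  exact PrincipalIdealRing.isMaximal_of_irreducible
    (Nat.prime_iff_prime_int.mp Fact.out).irreducible

theorem RingHom.exists_comp_eq_of_isIntegral {R S F : Type*} [CommRing R] [CommRing S]
    [Field F] [IsAlgClosed F] {i : R →+* S} (hi : i.IsIntegral) (hinj : Function.Injective i)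
    (f : R →+* F) [(RingHom.ker f).IsMaximal] :
    ∃ g : S →+* F, g.comp i = f := by
  let := i.toAlgebra
  have : Algebra.IsIntegral R S := ⟨hi⟩
  have : FaithfulSMul R S := (faithfulSMul_iff_algebraMap_injective R S).mpr hinj
  obtain ⟨Q, _, _⟩ := Ideal.exists_maximal_ideal_liesOver_of_isIntegral (S := S) (RingHom.ker f)
  let := Ideal.Quotient.field (RingHom.ker f)
  let := Ideal.Quotient.field Q
  let := (RingHom.kerLift f).toAlgebra
  let φ : S ⧸ Q →ₐ[R ⧸ RingHom.ker f] F := IsAlgClosed.lift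
  refine ⟨φ.toRingHom.comp (Ideal.Quotient.mk Q), RingHom.ext fun r => ?_⟩
  change φ (algebraMap (R ⧸ RingHom.ker f) (S ⧸ Q) (Ideal.Quotient.mk _ r)) = f r
  rw [φ.commutes]
  exact RingHom.kerLift_mk f r

theorem Ideal.injective_algebraMap_quotient_of_mem_minimalPrimes {R T : Type*} [CommRing R]
    [IsDomain R] [CommRing T] [Algebra R T] [Module.IsTorsionFree R T] {P : Ideal T}
    (hP : P ∈ minimalPrimes T) : Function.Injective (algebraMap R (T ⧸ P)) := by
  refine (injective_iff_map_eq_zero _).mpr fun r hr => ?_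
  by_contra hr0
  refine notMem_nonZeroDivisors_of_mem_mem_minimalPrimes (x := algebraMap R T r) ?_ hP ?_
  · rwa [IsScalarTower.algebraMap_apply R T (T ⧸ P), Ideal.Quotient.algebraMap_eq,
      Ideal.Quotient.eq_zero_iff_mem] at hr
  · refine mem_nonZeroDivisors_iff_right.mpr fun y hy => (smul_eq_zero_iff_right hr0).mp ?_
    rwa [Algebra.smul_def, mul_comm]

theorem NumberField.of_fractionRing (A : Type*) [CommRing A] [IsDomain A]
    [Module.IsTorsionFree ℤ A] [Module.Finite ℤ A] : NumberField (FractionRing A) := by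
  let := FractionRing.liftAlgebra ℤ (FractionRing A)
  have : NumberField (FractionRing ℤ) :=
    .of_ringEquiv _ _ (FractionRing.algEquiv ℤ ℚ).symm.toRingEquiv
  exact .of_module_finite (FractionRing ℤ) _

theorem IsIntegralClosure.lift_injective (R A B : Type*) {S : Type*} [CommRing R] [CommRing A]
    [CommRing B] [Algebra R B] [Algebra A B] [IsIntegralClosure A R B] [CommRing S]
    [Algebra R S] [Algebra S B] [IsScalarTower R S B] [Algebra R A] [IsScalarTower R A B]
    [Algebra.IsIntegral R S] [FaithfulSMul S B] :
    Function.Injective (lift R A B : S →ₐ[R] A) := fun x y h =>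
  FaithfulSMul.algebraMap_injective S B (by simpa using congrArg (algebraMap A B) h)

theorem exists_isIntegral_injective_ringHom_integralClosure (A K : Type*) [CommRing A]
    [Algebra.IsIntegral ℤ A] [Field K] [Algebra A K] [FaithfulSMul A K] :
    ∃ ι : A →+* integralClosure ℤ K, ι.IsIntegral ∧ Function.Injective ι := by
  let ι : A →ₐ[ℤ] integralClosure ℤ K := IsIntegralClosure.lift ℤ _ K
  refine ⟨ι, ?_, IsIntegralClosure.lift_injective ℤ _ K⟩
  refine RingHom.IsIntegral.tower_top (algebraMap ℤ A) _ ?_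
  rw [Subsingleton.elim (RingHom.comp _ _) (algebraMap ℤ _)]
  exact fun x => Algebra.IsIntegral.isIntegral x

theorem stmt11 (p : ℕ) [Fact p.Prime]
    (T : Type) [CommRing T] [Module.Free ℤ T] [Module.Finite ℤ T]
    (T' : Subring T) (hint : ∀ x : T, IsIntegral T' x)
    (f : T' →+* AlgebraicClosure (ZMod p)) :
    ∃ (K : Type) (_ : Field K) (_ : NumberField K)
      (q : Ideal (integralClosure ℤ K))
      (g : T →+* integralClosure ℤ K)
      (ι : (integralClosure ℤ K) ⧸ q →+* AlgebraicClosure (ZMod p)),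
      q.IsMaximal ∧ (p : integralClosure ℤ K) ∈ q ∧ Function.Injective ι ∧
      ∀ x : T', ι (Ideal.Quotient.mk q (g (x : T))) = f x := by
  have : Algebra.IsIntegral ℤ T := .of_finite ℤ T
  have : Algebra.IsIntegral ℤ T' := .of_injective T'.subtype.toIntAlgHom Subtype.val_injective
  have := f.ker_isMaximal_of_isIntegral_int p
  obtain ⟨F, hF⟩ := RingHom.exists_comp_eq_of_isIntegral (i := T'.subtype) hint
    Subtype.val_injective f
  have : (RingHom.ker F).IsPrime := RingHom.ker_isPrime F
  obtain ⟨P, hP, hPF⟩ := Ideal.exists_minimalPrimes_le (bot_le : ⊥ ≤ RingHom.ker F)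
  have : P.IsPrime := hP.1.1
  have : Module.IsTorsionFree ℤ (T ⧸ P) := Module.isTorsionFree_iff_algebraMap_injective.mpr
    (Ideal.injective_algebraMap_quotient_of_mem_minimalPrimes hP)
  obtain ⟨ι, hι, hιinj⟩ :=
    exists_isIntegral_injective_ringHom_integralClosure (T ⧸ P) (FractionRing (T ⧸ P))
  let F' := Ideal.Quotient.lift P F hPF
  have := F'.ker_isMaximal_of_isIntegral_int p
  obtain ⟨Φ, hΦ⟩ := RingHom.exists_comp_eq_of_isIntegral hι hιinj F'
  have := Φ.ker_isMaximal_of_isIntegral_int p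
  refine ⟨FractionRing (T ⧸ P), inferInstance, .of_fractionRing _, RingHom.ker Φ,
    ι.comp (Ideal.Quotient.mk P), RingHom.kerLift Φ, inferInstance, ?_,
    RingHom.kerLift_injective Φ, fun x => ?_⟩
  · simp
  · rw [RingHom.kerLift_mk, RingHom.comp_apply, ← RingHom.comp_apply Φ, hΦ, ← hF]
    rfl
end

section
/- Let p be an odd prime, M = Z_p², and T an endomorphism of M. Suppose f, g ∈ M satisfy f ≡ g (mod pM), f ≢ 0 (mod pM), Tf = λf, Tg = μg, {f, g} is a basis of M ⊗ Q̄_p, and λ ≢ μ (mod p²). Then λ ≡ μ (mod p), and h := f + g satisfies Th ≡ ((λ+μ)/2)·h (mod p²M); moreover the element (λ+μ)/2 ∈ Z_p/p²Z_p is not congruent mod p² to any eigenvalue of T on M ⊗ Q̄_p. -/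
/-!
STATEMENT 17: Let p be an odd prime, M = ℤ_p², T an endomorphism of M, and f, g ∈ M
with f ≡ g (mod pM), f ≢ 0 (mod pM), Tf = λf, Tg = μg, {f, g} a basis of M ⊗ Q̄_p
(equivalently, the images of f and g in ℚ_p² are linearly independent), and
λ ≢ μ (mod p²).  Then λ ≡ μ (mod p), and h := f + g satisfies
Th ≡ ((λ+μ)/2)·h (mod p²M); moreover (λ+μ)/2 is not congruent mod p² to any eigenvalue
of T on M ⊗ Q̄_p — by the eigenbasis hypothesis these eigenvalues are exactly λ and μ,
so this says (λ+μ)/2 ≢ λ and (λ+μ)/2 ≢ μ (mod p²).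
-/
theorem stmt17 (p : ℕ) [Fact p.Prime] (hodd : p ≠ 2)
    (T : (Fin 2 → ℤ_[p]) →ₗ[ℤ_[p]] (Fin 2 → ℤ_[p]))
    (f g : Fin 2 → ℤ_[p]) (lam mu : ℤ_[p])
    (hfg : ∀ i, (p : ℤ_[p]) ∣ (f i - g i))
    (hf0 : ¬ ∀ i, (p : ℤ_[p]) ∣ f i)
    (hTf : T f = lam • f) (hTg : T g = mu • g)
    (hbasis : LinearIndependent ℚ_[p]
      ![fun i => (f i : ℚ_[p]), fun i => (g i : ℚ_[p])])
    (hlm : ¬ (p : ℤ_[p]) ^ 2 ∣ (lam - mu)) :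
    ((p : ℤ_[p]) ∣ (lam - mu)) ∧
    ∃ nu : ℤ_[p], 2 * nu = lam + mu ∧
      (∀ i, (p : ℤ_[p]) ^ 2 ∣ (T (f + g) i - nu * (f + g) i)) ∧
      ¬ (p : ℤ_[p]) ^ 2 ∣ (nu - lam) ∧ ¬ (p : ℤ_[p]) ^ 2 ∣ (nu - mu) := by
  -- 2 is a unit in ℤ_[p]
  have hp2 : ¬ ((p : ℤ) ∣ (2 : ℤ)) := by
    intro h
    have h' : p ∣ 2 := Int.ofNat_dvd.mp (by exact_mod_cast h)
    exact hodd ((Nat.prime_dvd_prime_iff_eq Fact.out Nat.prime_two).mp h')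
  have hu : IsUnit (2 : ℤ_[p]) := by
    rw [PadicInt.isUnit_iff]
    have h1 : ‖(2 : ℤ_[p])‖ ≤ 1 := PadicInt.norm_le_one _
    have h2 : ¬ ‖((2 : ℤ) : ℤ_[p])‖ < 1 := by
      rw [PadicInt.norm_int_lt_one_iff_dvd]; exact hp2
    push_cast at h2
    exact le_antisymm h1 (not_lt.mp h2)
  obtain ⟨u, hu2⟩ := hu
  have hinv : (↑u⁻¹ : ℤ_[p]) * 2 = 1 := by
    rw [← hu2]; exact_mod_cast u.inv_mul
  -- p ∣ lam - mu
  choose c hc using hfg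
  have hfgc : f - g = (p : ℤ_[p]) • c := by
    funext i
    simp [hc i, smul_eq_mul]
  have hTsub : lam • f - mu • g = (p : ℤ_[p]) • T c := by
    rw [← hTf, ← hTg, ← map_sub, hfgc, map_smul]
  have hdiv1 : ∀ i, (p : ℤ_[p]) ∣ lam * f i - mu * g i := by
    intro i
    have := congrFun hTsub i
    simp only [Pi.sub_apply, Pi.smul_apply, smul_eq_mul] at this
    exact ⟨T c i, this⟩
  have hdg : ∀ i, (p : ℤ_[p]) ∣ (lam - mu) * g i := by
    intro i
    have h1 : (lam - mu) * g i = (lam * f i - mu * g i) - lam * (f i - g i) := by ring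
    rw [h1]
    exact dvd_sub (hdiv1 i) (Dvd.dvd.mul_left ⟨c i, hc i⟩ lam)
  have hg0 : ¬ ∀ i, (p : ℤ_[p]) ∣ g i := by
    intro h
    apply hf0
    intro i
    have : (p : ℤ_[p]) ∣ (f i - g i) + g i := dvd_add ⟨c i, hc i⟩ (h i)
    simpa using this
  push_neg at hg0
  obtain ⟨i0, hgi0⟩ := hg0
  have hplm : (p : ℤ_[p]) ∣ lam - mu :=
    ((PadicInt.prime_p).dvd_mul.mp (hdg i0)).resolve_right hgi0
  refine ⟨hplm, ↑u⁻¹ * (lam + mu), ?_, ?_, ?_, ?_⟩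
  · calc 2 * (↑u⁻¹ * (lam + mu)) = (↑u⁻¹ * 2) * (lam + mu) := by ring
    _ = lam + mu := by rw [hinv]; ring
  · intro i
    have hnu : 2 * (↑u⁻¹ * (lam + mu)) = lam + mu := by
      calc 2 * (↑u⁻¹ * (lam + mu)) = (↑u⁻¹ * 2) * (lam + mu) := by ring
      _ = lam + mu := by rw [hinv]; ring
    have hTi : T (f + g) i = lam * f i + mu * g i := by
      rw [map_add, hTf, hTg]
      simp [smul_eq_mul]
    have key : 2 * (T (f + g) i - (↑u⁻¹ * (lam + mu)) * (f + g) i) =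
        (lam - mu) * (f i - g i) := by
      rw [hTi]
      simp only [Pi.add_apply]
      linear_combination (-(f i + g i)) * hnu
    have hd : (p : ℤ_[p]) ^ 2 ∣ (lam - mu) * (f i - g i) := by
      rw [sq]; exact mul_dvd_mul hplm ⟨c i, hc i⟩
    have hd2 : (p : ℤ_[p]) ^ 2 ∣ 2 * (T (f + g) i - (↑u⁻¹ * (lam + mu)) * (f + g) i) := by
      rw [key]; exact hd
    have : T (f + g) i - (↑u⁻¹ * (lam + mu)) * (f + g) i =
        ↑u⁻¹ * (2 * (T (f + g) i - (↑u⁻¹ * (lam + mu)) * (f + g) i)) := by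
      calc T (f + g) i - (↑u⁻¹ * (lam + mu)) * (f + g) i
          = (↑u⁻¹ * 2) * (T (f + g) i - (↑u⁻¹ * (lam + mu)) * (f + g) i) := by
            rw [hinv]; ring
        _ = _ := by ring
    rw [this]
    exact hd2.mul_left _
  · intro h
    apply hlm
    have h2 : (p : ℤ_[p]) ^ 2 ∣ 2 * (↑u⁻¹ * (lam + mu) - lam) := h.mul_left 2
    have key : 2 * (↑u⁻¹ * (lam + mu) - lam) = -(lam - mu) + (2 * ↑u⁻¹ - 1) * (lam + mu) := by
      ring
    have h21 : (2 : ℤ_[p]) * ↑u⁻¹ - 1 = 0 := by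
      rw [mul_comm, hinv]; ring
    rw [key, h21] at h2
    simpa using (dvd_neg.mp (by simpa using h2))
  · intro h
    apply hlm
    have h2 : (p : ℤ_[p]) ^ 2 ∣ 2 * (↑u⁻¹ * (lam + mu) - mu) := h.mul_left 2
    have key : 2 * (↑u⁻¹ * (lam + mu) - mu) = (lam - mu) + (2 * ↑u⁻¹ - 1) * (lam + mu) := by
      ring
    have h21 : (2 : ℤ_[p]) * ↑u⁻¹ - 1 = 0 := by
      rw [mul_comm, hinv]; ring
    rw [key, h21] at h2
    simpa using h2
end

section
/- Let p be an odd prime, m ≥ 2, s ≥ 1, and ζ a primitive p^s-th root of unity in Q̄_p. Then the natural injection Z_p/(p^m) ↪ Z_p[ζ]/(1−ζ)^{(m−1)p^{s−1}(p−1)+1} is not surjective; in particular, the image of ζ in the target ring does not lie in the image of Z_p/(p^m). Consequently, a character η : Z_p^× → Z_p[ζ]^× of exact order p^s cannot be congruent mod p^m to any character of Z_p^× with values in Z_p^×. -/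
/-!
Write `π = 1 - ζ` and `e = φ(p ^ s) = p ^ (s - 1) * (p - 1)`. Evaluating the `p ^ s`-th cyclotomic
polynomial at `1` shows that `p` is a unit times `π ^ e`, so a nonzero `x ∈ ℤ_p` of valuation `v`
maps to a unit times `π ^ (e * v)`. This gives the kernel `(p ^ m)`, and since `e ≥ 2` for odd `p`,
an element of `ℤ_p` divisible by `π` is divisible by `π ^ 2`. A primitive `p ^ s`-th root of unity
`μ` has `1 - μ` associated to `π`, so `μ ≡ c` modulo `π ^ 2` would make `1 - c` divisible by `π` but
not by `π ^ 2`. A character of exact order `p ^ s` takes such a `μ` as one of its values.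
-/

theorem isUnit_map_iff_of_isIntegral {R S : Type*} [CommRing R] [CommRing S] {f : R →+* S}
    (hf : Function.Injective f) (hfi : f.IsIntegral) (r : R) : IsUnit (f r) ↔ IsUnit r := by
  rw [← Ideal.span_singleton_eq_top, ← Ideal.span_singleton_eq_top, ← Set.image_singleton,
    ← Ideal.map_span, Ideal.map_eq_top_iff f hf hfi]

theorem MonoidHom.exists_orderOf_apply_eq_prime_pow {G H : Type*} [Monoid G] [CommGroup H]
    {p k : ℕ} [Fact p.Prime] (η : G →* H) (hη : orderOf η = p ^ (k + 1)) :
    ∃ g, orderOf (η g) = p ^ (k + 1) := by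
  have hne : η ^ p ^ k ≠ 1 := pow_ne_one_of_lt_orderOf (pow_ne_zero _ (Fact.out : p.Prime).ne_zero)
    (hη ▸ Nat.pow_lt_pow_right (Fact.out : p.Prime).one_lt k.lt_succ_self)
  obtain ⟨g, hg⟩ : ∃ g, (η ^ p ^ k) g ≠ 1 := by
    by_contra! h
    exact hne (MonoidHom.ext h)
  refine ⟨g, orderOf_eq_prime_pow hg ?_⟩
  rw [← MonoidHom.pow_apply, ← hη, pow_orderOf_eq_one, MonoidHom.one_apply]

namespace IsPrimitiveRoot

variable {A : Type*} [CommRing A] [IsDomain A] {ζ μ : A} {n : ℕ}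

theorem associated_one_sub [NeZero n] (hζ : IsPrimitiveRoot ζ n) (hμ : IsPrimitiveRoot μ n) :
    Associated (1 - ζ) (1 - μ) := by
  obtain ⟨i, -, hi, rfl⟩ := hζ.isPrimitiveRoot_iff.mp hμ
  simpa only [neg_sub] using
    (hζ.associated_sub_one_pow_sub_one_of_coprime hi).neg_left.neg_right

open Polynomial in
theorem associated_one_sub_pow_totient {p k : ℕ} [Fact p.Prime]
    (hζ : IsPrimitiveRoot ζ (p ^ (k + 1))) :
    Associated ((1 - ζ) ^ Nat.totient (p ^ (k + 1))) (p : A) := by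
  rw [← eval_one_cyclotomic_prime_pow (R := A) k,
    cyclotomic_eq_prod_X_sub_primitiveRoots hζ, eval_prod, ← hζ.card_primitiveRoots,
    ← Finset.prod_const]
  simp only [eval_sub, eval_X, eval_C]
  exact Associated.prod _ _ _ fun μ hμ ↦
    hζ.associated_one_sub (isPrimitiveRoot_of_mem_primitiveRoots hμ)

end IsPrimitiveRoot

namespace PadicInt

variable {p : ℕ} [Fact p.Prime] {O : Type*} [CommRing O] [IsDomain O] (f : ℤ_[p] →+* O)
  {π : O} {e : ℕ}

theorem pow_dvd_map_iff (hπ0 : π ≠ 0) (hπ : ¬IsUnit π) (hpe : Associated (π ^ e) (p : O))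
    {x : ℤ_[p]} (hx : x ≠ 0) (n : ℕ) : π ^ n ∣ f x ↔ n ≤ e * x.valuation := by
  have hfx : Associated (π ^ (e * x.valuation)) (f x) := by
    conv_rhs => rw [unitCoeff_spec hx]
    rw [pow_mul, map_mul, map_pow, map_natCast]
    exact hpe.pow_pow.trans (associated_unit_mul_right _ _ ((unitCoeff hx).isUnit.map f))
  rw [← hfx.dvd_iff_dvd_right, pow_dvd_pow_iff hπ0 hπ]

variable (hπ0 : π ≠ 0) (hπ : ¬IsUnit π) (hpe : Associated (π ^ e) (p : O))
include hπ0 hπ hpe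

theorem pow_dvd_map_iff_pow_p_dvd (he : 1 ≤ e) {m : ℕ} (hm : 1 ≤ m) (x : ℤ_[p]) :
    π ^ ((m - 1) * e + 1) ∣ f x ↔ (p : ℤ_[p]) ^ m ∣ x := by
  rcases eq_or_ne x 0 with rfl | hx
  · simp
  rw [pow_dvd_map_iff f hπ0 hπ hpe hx, ← Ideal.mem_span_singleton,
    mem_span_pow_iff_le_valuation x hx]
  obtain ⟨m, rfl⟩ := Nat.exists_eq_add_of_le' hm
  rw [Nat.add_sub_cancel]
  constructor <;> intro h
  · by_contra! hv
    nlinarith [Nat.mul_le_mul_left e (Nat.lt_succ_iff.mp hv)]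
  · nlinarith [Nat.mul_le_mul_left e h]

theorem sq_dvd_map_of_dvd (he : 2 ≤ e) {c : ℤ_[p]} (hc : π ∣ f c) : π ^ 2 ∣ f c := by
  rcases eq_or_ne c 0 with rfl | hc0
  · simp
  rw [← pow_one π, pow_dvd_map_iff f hπ0 hπ hpe hc0] at hc
  rw [pow_dvd_map_iff f hπ0 hπ hpe hc0]
  nlinarith [Nat.pos_of_mul_pos_left hc]

theorem not_sq_dvd_sub_map (he : 2 ≤ e) {μ : O} (hμ : Associated π (1 - μ)) (c : ℤ_[p]) :
    ¬π ^ 2 ∣ μ - f c := by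
  intro h
  have hsplit : f (1 - c) = (1 - μ) + (μ - f c) := by rw [map_sub, map_one]; ring
  have h1 : π ∣ f (1 - c) := hsplit ▸ dvd_add hμ.dvd (dvd_trans (dvd_pow_self π two_ne_zero) h)
  have h2 : π ^ 2 ∣ 1 - μ := by
    simpa only [hsplit, add_sub_cancel_right] using dvd_sub (sq_dvd_map_of_dvd f hπ0 hπ hpe he h1) h
  rw [← hμ.dvd_iff_dvd_right, ← pow_one π, ← pow_mul, pow_dvd_pow_iff hπ0 hπ] at h2
  omega

end PadicInt

theorem PadicInt.not_isUnit_natCast_integralClosure (p : ℕ) [Fact p.Prime] (K : Type*) [Field K]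
    [Algebra ℚ_[p] K] [Algebra ℤ_[p] K] [IsScalarTower ℤ_[p] ℚ_[p] K] :
    ¬IsUnit (p : integralClosure ℤ_[p] K) := by
  have hinj : Function.Injective (algebraMap ℤ_[p] (integralClosure ℤ_[p] K)) := by
    intro x y hxy
    have := congrArg (fun z : integralClosure ℤ_[p] K ↦ (z : K)) hxy
    simp only [IsScalarTower.algebraMap_apply ℤ_[p] ℚ_[p] K, Subalgebra.coe_algebraMap] at this
    exact IsFractionRing.injective ℤ_[p] ℚ_[p] ((algebraMap ℚ_[p] K).injective this)
  rw [← map_natCast (algebraMap ℤ_[p] _),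
    isUnit_map_iff_of_isIntegral hinj (algebraMap_isIntegral_iff.mpr inferInstance)]
  exact PadicInt.p_nonunit

theorem stmt18_general (p : ℕ) [Fact p.Prime] (hodd : p ≠ 2) (m s : ℕ) (hm : 2 ≤ m) (hs : 1 ≤ s)
    (K : Type) [Field K] [Algebra ℚ_[p] K]
    [Algebra ℤ_[p] K] [IsScalarTower ℤ_[p] ℚ_[p] K]
    (ζ : integralClosure ℤ_[p] K) (hζ : IsPrimitiveRoot ζ (p ^ s)) :
    (∀ x : ℤ_[p],
        algebraMap ℤ_[p] (integralClosure ℤ_[p] K) x ∈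
          (Ideal.span {1 - ζ}) ^ ((m - 1) * (p ^ (s - 1) * (p - 1)) + 1)
        ↔ (p : ℤ_[p]) ^ m ∣ x) ∧
    (¬ ∃ x : ℤ_[p],
        Ideal.Quotient.mk ((Ideal.span {1 - ζ}) ^ ((m - 1) * (p ^ (s - 1) * (p - 1)) + 1))
            (algebraMap ℤ_[p] (integralClosure ℤ_[p] K) x) =
          Ideal.Quotient.mk ((Ideal.span {1 - ζ}) ^ ((m - 1) * (p ^ (s - 1) * (p - 1)) + 1))
            ζ) ∧
    (∀ η : ℤ_[p]ˣ →* (integralClosure ℤ_[p] K)ˣ, orderOf η = p ^ s →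
      ¬ ∃ χ : ℤ_[p]ˣ →* ℤ_[p]ˣ, ∀ u : ℤ_[p]ˣ,
        ((η u : integralClosure ℤ_[p] K) -
            algebraMap ℤ_[p] (integralClosure ℤ_[p] K) (χ u : ℤ_[p])) ∈
          (Ideal.span {1 - ζ}) ^ ((m - 1) * (p ^ (s - 1) * (p - 1)) + 1)) := by
  obtain ⟨k, rfl⟩ := Nat.exists_eq_add_of_le' hs
  have hp := (Fact.out : p.Prime)
  set f := algebraMap ℤ_[p] (integralClosure ℤ_[p] K)
  have hpe : Associated ((1 - ζ) ^ (p ^ k * (p - 1))) (p : integralClosure ℤ_[p] K) := by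
    rw [← Nat.totient_prime_pow_succ hp]
    exact hζ.associated_one_sub_pow_totient
  have hπ0 : 1 - ζ ≠ 0 :=
    sub_ne_zero.mpr (hζ.ne_one (Nat.one_lt_pow k.succ_ne_zero hp.one_lt)).symm
  have hπ : ¬IsUnit (1 - ζ) := fun h ↦
    PadicInt.not_isUnit_natCast_integralClosure p K (hpe.isUnit_iff.mp (h.pow _))
  have he : 2 ≤ p ^ k * (p - 1) :=
    (show 2 ≤ p - 1 by have := hp.two_le; omega).trans (Nat.le_mul_of_pos_left _ (pow_pos hp.pos k))
  have hγ : 2 ≤ (m - 1) * (p ^ k * (p - 1)) + 1 :=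
    Nat.succ_le_succ (Nat.mul_pos (by omega) (by omega))
  have not_congr {μ} (hμ : Associated (1 - ζ) (1 - μ)) (c : ℤ_[p])
      (h : (1 - ζ) ^ ((m - 1) * (p ^ k * (p - 1)) + 1) ∣ μ - f c) : False :=
    PadicInt.not_sq_dvd_sub_map f hπ0 hπ hpe he hμ c ((pow_dvd_pow _ hγ).trans h)
  simp only [Nat.add_sub_cancel, Ideal.span_singleton_pow, Ideal.mem_span_singleton,
    Ideal.Quotient.eq]
  refine ⟨PadicInt.pow_dvd_map_iff_pow_p_dvd f hπ0 hπ hpe (by omega) (by omega), ?_, ?_⟩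
  · rintro ⟨x, hx⟩
    exact not_congr (Associated.refl _) x (by simpa using hx.neg_right)
  · rintro η hη ⟨χ, hχ⟩
    obtain ⟨u, hu⟩ := η.exists_orderOf_apply_eq_prime_pow hη
    have hprim : IsPrimitiveRoot (η u : integralClosure ℤ_[p] K) (p ^ (k + 1)) :=
      IsPrimitiveRoot.coe_units_iff.mpr (hu ▸ .orderOf _)
    exact not_congr (hζ.associated_one_sub hprim) _ (hχ u)

set_option synthInstance.maxHeartbeats 1000000 in
set_option maxHeartbeats 1000000 in
theorem stmt18 (p : ℕ) [Fact p.Prime] (hodd : p ≠ 2) (m s : ℕ) (hm : 2 ≤ m) (hs : 1 ≤ s)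
    (K : Type) [Field K] [Algebra ℚ_[p] K] [FiniteDimensional ℚ_[p] K]
    [Algebra ℤ_[p] K] [IsScalarTower ℤ_[p] ℚ_[p] K]
    (ζ : integralClosure ℤ_[p] K) (hζ : IsPrimitiveRoot ζ (p ^ s))
    (hgen : Algebra.adjoin ℚ_[p] {(ζ : K)} = ⊤) :
    (∀ x : ℤ_[p],
        algebraMap ℤ_[p] (integralClosure ℤ_[p] K) x ∈
          (Ideal.span {1 - ζ}) ^ ((m - 1) * (p ^ (s - 1) * (p - 1)) + 1)
        ↔ (p : ℤ_[p]) ^ m ∣ x) ∧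
    (¬ ∃ x : ℤ_[p],
        Ideal.Quotient.mk ((Ideal.span {1 - ζ}) ^ ((m - 1) * (p ^ (s - 1) * (p - 1)) + 1))
            (algebraMap ℤ_[p] (integralClosure ℤ_[p] K) x) =
          Ideal.Quotient.mk ((Ideal.span {1 - ζ}) ^ ((m - 1) * (p ^ (s - 1) * (p - 1)) + 1))
            ζ) ∧
    (∀ η : ℤ_[p]ˣ →* (integralClosure ℤ_[p] K)ˣ, orderOf η = p ^ s →
      ¬ ∃ χ : ℤ_[p]ˣ →* ℤ_[p]ˣ, ∀ u : ℤ_[p]ˣ,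
        ((η u : integralClosure ℤ_[p] K) -
            algebraMap ℤ_[p] (integralClosure ℤ_[p] K) (χ u : ℤ_[p])) ∈
          (Ideal.span {1 - ζ}) ^ ((m - 1) * (p ^ (s - 1) * (p - 1)) + 1)) :=
  stmt18_general p hodd m s hm hs K ζ hζ
end

section
/- Let O be the ring of integers of a finite extension of Q_p with uniformizer generating maximal ideal containing p, let M be a finite free O-module, and suppose f_1, …, f_t ∈ M are such that their reductions mod the maximal ideal are linearly independent, and [ℓ]f_i = λ_i f_i for elements λ_i ∈ O. If f := Σ_i f_i satisfies [ℓ]f ≡ λ·f (mod p^m M) for some λ ∈ O, then λ_i ≡ λ_j (mod p^m) for all i, j. -/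
/-!
The ring `O` is a local Dedekind domain, hence a discrete valuation ring, so every nonzero
element of `O` is a unit times a power of a uniformizer `π`. Cancelling `π ^ k` lifts residual
independence of the `f i` to: if `π ^ k` divides every coordinate of `∑ i, c i • f i`, then it
divides every `c i`. As `A (∑ i, f i) - λ • ∑ i, f i = ∑ i, (λ i - λ) • f i`, this gives
`p ^ m ∣ λ i - λ` for every `i`.
-/

section

variable {R τ ι : Type*} [CommRing R] [Fintype τ] (f : τ → ι → R)

theorem pow_dvd_coeff_of_pow_dvd_sum [IsDomain R] {π : R} (hπ : π ≠ 0)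
    (hres : ∀ c : τ → R, (∀ j, π ∣ ∑ i, c i * f i j) → ∀ i, π ∣ c i) (k : ℕ) :
    ∀ c : τ → R, (∀ j, π ^ k ∣ ∑ i, c i * f i j) → ∀ i, π ^ k ∣ c i := by
  induction k with
  | zero => simp
  | succ k ih =>
    intro c hc
    choose d hd using ih c fun j => (pow_dvd_pow π k.le_succ).trans (hc j)
    have hsum : ∀ j, ∑ i, c i * f i j = π ^ k * ∑ i, d i * f i j := fun j => by
      simp only [hd, Finset.mul_sum, mul_assoc]
    have hd_res : ∀ j, π ∣ ∑ i, d i * f i j := fun j => by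
      have := hc j
      rwa [hsum, pow_succ, mul_dvd_mul_iff_left (pow_ne_zero k hπ)] at this
    intro i
    rw [hd, pow_succ]
    exact mul_dvd_mul_left _ (hres d hd_res i)

theorem IsDiscreteValuationRing.dvd_coeff_of_dvd_sum [IsDomain R] [IsDiscreteValuationRing R]
    (hres : ∀ c : τ → R, (∀ j, ∑ i, c i * f i j ∈ IsLocalRing.maximalIdeal R) →
      ∀ i, c i ∈ IsLocalRing.maximalIdeal R)
    {a : R} (ha : a ≠ 0) (c : τ → R) (hc : ∀ j, a ∣ ∑ i, c i * f i j) (i : τ) : a ∣ c i := by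
  obtain ⟨π, hπ⟩ := IsDiscreteValuationRing.exists_irreducible R
  obtain ⟨e, u, rfl⟩ := IsDiscreteValuationRing.eq_unit_mul_pow_irreducible ha hπ
  simp only [hπ.maximalIdeal_eq, Ideal.mem_span_singleton] at hres
  simp only [Units.mul_left_dvd] at hc ⊢
  exact pow_dvd_coeff_of_pow_dvd_sum f hπ.ne_zero hres e c hc i

end

theorem LinearMap.map_sum_sub_smul_sum_of_eigen {R M τ : Type*} [CommRing R] [AddCommGroup M]
    [Module R M] [Fintype τ] (A : M →ₗ[R] M) (v : τ → M) (μ : τ → R)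
    (hA : ∀ i, A (v i) = μ i • v i) (ν : R) :
    A (∑ i, v i) - ν • ∑ i, v i = ∑ i, (μ i - ν) • v i := by
  simp only [map_sum, hA, Finset.smul_sum, sub_smul, Finset.sum_sub_distrib]

theorem isDiscreteValuationRing_integralClosure (A F L : Type*) [CommRing A]
    [IsDedekindDomain A] [Field F] [Algebra A F] [IsFractionRing A F] [Field L] [Algebra F L]
    [Algebra A L] [IsScalarTower A F L] [FiniteDimensional F L] [Algebra.IsSeparable F L]
    [IsLocalRing (integralClosure A L)] (hA : ¬IsField A) :
    IsDiscreteValuationRing (integralClosure A L) := by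
  have hded := integralClosure.isDedekindDomain A F L
  have : Algebra.IsIntegral A (integralClosure A L) := IsIntegralClosure.isIntegral_algebra A L
  have hinj : Function.Injective (algebraMap A (integralClosure A L)) := by
    intro a b hab
    apply IsFractionRing.injective A F
    apply (algebraMap F L).injective
    simpa [← IsScalarTower.algebraMap_apply] using congrArg Subtype.val hab
  have hnf := (Algebra.IsIntegral.isField_iff_isField hinj).not.mp hA
  exact ((IsDiscreteValuationRing.TFAE _ hnf).out 0 2).mpr hded

set_option synthInstance.maxHeartbeats 1000000 in
set_option maxHeartbeats 1000000 in
theorem stmt19_general (p : ℕ) [Fact p.Prime] (m : ℕ)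
    (K : Type) [Field K] [Algebra ℚ_[p] K] [FiniteDimensional ℚ_[p] K]
    [Algebra ℤ_[p] K] [IsScalarTower ℤ_[p] ℚ_[p] K]
    [IsLocalRing (integralClosure ℤ_[p] K)]
    (ι : Type)
    (A : (ι → integralClosure ℤ_[p] K) →ₗ[integralClosure ℤ_[p] K]
        (ι → integralClosure ℤ_[p] K))
    (t : ℕ) (f : Fin t → (ι → integralClosure ℤ_[p] K))
    (lam : Fin t → integralClosure ℤ_[p] K)
    (heig : ∀ i, A (f i) = lam i • f i)
    (hindep : ∀ c : Fin t → integralClosure ℤ_[p] K,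
      (∀ j : ι, (∑ i, c i * f i j) ∈ IsLocalRing.maximalIdeal (integralClosure ℤ_[p] K)) →
      ∀ i, c i ∈ IsLocalRing.maximalIdeal (integralClosure ℤ_[p] K))
    (lam0 : integralClosure ℤ_[p] K)
    (hcong : ∀ j : ι,
      (p : integralClosure ℤ_[p] K) ^ m ∣
        (A (∑ i, f i) j - lam0 * (∑ i, f i) j)) :
    ∀ i i', (p : integralClosure ℤ_[p] K) ^ m ∣ (lam i - lam i') := by
  have := isDiscreteValuationRing_integralClosure ℤ_[p] ℚ_[p] K
    (IsDiscreteValuationRing.not_isField ℤ_[p])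
  have : CharZero K := charZero_of_injective_algebraMap (algebraMap ℚ_[p] K).injective
  have hp : (p : integralClosure ℤ_[p] K) ≠ 0 := by
    exact_mod_cast (Nat.cast_ne_zero (R := K)).mpr (Fact.out : p.Prime).ne_zero
  have hlam : ∀ i, (p : integralClosure ℤ_[p] K) ^ m ∣ lam i - lam0 := by
    refine IsDiscreteValuationRing.dvd_coeff_of_dvd_sum f hindep (pow_ne_zero m hp) _ fun j => ?_
    have hj := congrFun (A.map_sum_sub_smul_sum_of_eigen f lam heig lam0) j
    simp only [Pi.sub_apply, Pi.smul_apply, smul_eq_mul, Finset.sum_apply] at hj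
    simpa only [Finset.sum_apply, hj] using hcong j
  intro i i'
  simpa using dvd_sub (hlam i) (hlam i')

set_option synthInstance.maxHeartbeats 1000000 in
set_option maxHeartbeats 1000000 in
theorem stmt19 (p : ℕ) [Fact p.Prime] (m : ℕ) (hm : 1 ≤ m)
    (K : Type) [Field K] [Algebra ℚ_[p] K] [FiniteDimensional ℚ_[p] K]
    [Algebra ℤ_[p] K] [IsScalarTower ℤ_[p] ℚ_[p] K]
    [IsLocalRing (integralClosure ℤ_[p] K)]
    (ι : Type) [Fintype ι]
    (A : (ι → integralClosure ℤ_[p] K) →ₗ[integralClosure ℤ_[p] K]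
        (ι → integralClosure ℤ_[p] K))
    (t : ℕ) (f : Fin t → (ι → integralClosure ℤ_[p] K))
    (lam : Fin t → integralClosure ℤ_[p] K)
    (heig : ∀ i, A (f i) = lam i • f i)
    (hindep : ∀ c : Fin t → integralClosure ℤ_[p] K,
      (∀ j : ι, (∑ i, c i * f i j) ∈ IsLocalRing.maximalIdeal (integralClosure ℤ_[p] K)) →
      ∀ i, c i ∈ IsLocalRing.maximalIdeal (integralClosure ℤ_[p] K))
    (lam0 : integralClosure ℤ_[p] K)
    (hcong : ∀ j : ι,
      (p : integralClosure ℤ_[p] K) ^ m ∣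
        (A (∑ i, f i) j - lam0 * (∑ i, f i) j)) :
    ∀ i i', (p : integralClosure ℤ_[p] K) ^ m ∣ (lam i - lam i') :=
  stmt19_general p m K ι A t f lam heig hindep lam0 hcong
end
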